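/- Let (M,g) be a manifold with unit parallel vector field V and a vector field W = JV satisfying ∇_X W = (b/2)(X − g(X,V)V − g(X,W)W) for a function b, where g(V,W)=0 and |W|=1. Then the distribution D = span{V,W}^⊥ is involutive, [V,W] = 0, and [V,D] ⊆ D, [W,D] ⊆ D. -/

import Mathlib

/-- Lie bracket of vector fields on a chart. -/
noncomputable def lieB {E : Type*} [NormedAddCommGroup E] [NormedSpace ℝ E]
    (X Y : E → E) : E → E := fun x => fderiv ℝ Y x (X x) - fderiv ℝ X x (Y x)

/-- Levi-Civita connection of a metric tensor on a chart. -/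
def IsLeviCivita {E : Type*} [NormedAddCommGroup E] [NormedSpace ℝ E]
    (g : E → E →L[ℝ] E →L[ℝ] ℝ) (nab : (E → E) → (E → E) → E → E) : Prop :=
  (∀ X Y Z : E → E, Differentiable ℝ Y → Differentiable ℝ Z → ∀ x : E,
      fderiv ℝ (fun y => g y (Y y) (Z y)) x (X x)
        = g x (nab X Y x) (Z x) + g x (Y x) (nab X Z x)) ∧
  (∀ X Y : E → E, Differentiable ℝ X → Differentiable ℝ Y → ∀ x : E,
      nab X Y x - nab Y X x = lieB X Y x)

/-- A vector field is a section of the distribution `D = span{V,W}^⊥`. -/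
def IsSectionOfD {E : Type*} [NormedAddCommGroup E] [NormedSpace ℝ E]
    (g : E → E →L[ℝ] E →L[ℝ] ℝ) (V W X : E → E) : Prop :=
  ∀ x : E, g x (X x) (V x) = 0 ∧ g x (X x) (W x) = 0

/-!
Metric compatibility turns a constant pairing into a skew relation `g(∇_X Y, Z) = -g(Y, ∇_X Z)`.
For `Y ∈ D` this gives `g(∇_X Y, V) = 0`, since `V` is parallel, and
`g(∇_X Y, W) = -(b/2) g(Y, X)`, which is symmetric in `X, Y ∈ D`. By torsion-freeness,
`g([X,Y], Z) = g(∇_X Y, Z) - g(∇_Y X, Z)`, so both components of `[X,Y]` along `V, W` vanish.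
The brackets with `V` and `W` are handled the same way, using that `∇_X W` is orthogonal to
`V` and `W` and that `∇_V W = 0`.
-/

/-- For `B`-orthonormal `v, w`, this is the `B`-orthogonal projection of `u` onto `span{v,w}ᗮ`;
the hypothesis on `W` reads `∇_X W = (b/2) • orthCompProj g V W X`. -/
noncomputable def orthCompProj {E : Type*} [NormedAddCommGroup E] [NormedSpace ℝ E]
    (B : E →L[ℝ] E →L[ℝ] ℝ) (v w u : E) : E :=
  u - B u v • v - B u w • w

section OrthCompProj

variable {E : Type*} [NormedAddCommGroup E] [NormedSpace ℝ E]
  (B : E →L[ℝ] E →L[ℝ] ℝ) {v w : E}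

theorem orthCompProj_apply_left (hv : B v v = 1) (hwv : B w v = 0) (u : E) :
    B (orthCompProj B v w u) v = 0 := by
  simp [orthCompProj, hv, hwv]

theorem orthCompProj_apply_right (hvw : B v w = 0) (hw : B w w = 1) (u : E) :
    B (orthCompProj B v w u) w = 0 := by
  simp [orthCompProj, hvw, hw]

theorem apply_orthCompProj_of_orthogonal {y : E} (hyv : B y v = 0) (hyw : B y w = 0) (u : E) :
    B y (orthCompProj B v w u) = B y u := by
  simp [orthCompProj, hyv, hyw]

end OrthCompProj

namespace IsLeviCivita

variable {E : Type*} [NormedAddCommGroup E] [NormedSpace ℝ E]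
  {g : E → E →L[ℝ] E →L[ℝ] ℝ} {nab : (E → E) → (E → E) → E → E}

theorem apply_lieB (hLC : IsLeviCivita g nab) {X Y : E → E}
    (hX : Differentiable ℝ X) (hY : Differentiable ℝ Y) (x u : E) :
    g x (lieB X Y x) u = g x (nab X Y x) u - g x (nab Y X x) u := by
  rw [← hLC.2 X Y hX hY x, map_sub, sub_apply]

theorem isSectionOfD_lieB_iff (hLC : IsLeviCivita g nab) {V W X Y : E → E}
    (hX : Differentiable ℝ X) (hY : Differentiable ℝ Y) :
    IsSectionOfD g V W (lieB X Y) ↔ ∀ x,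
      g x (nab X Y x) (V x) = g x (nab Y X x) (V x) ∧
        g x (nab X Y x) (W x) = g x (nab Y X x) (W x) := by
  simp only [IsSectionOfD, hLC.apply_lieB hX hY, sub_eq_zero]

theorem apply_nab_eq_neg_of_apply_const (hLC : IsLeviCivita g nab) (X : E → E) {Y Z : E → E}
    (hY : Differentiable ℝ Y) (hZ : Differentiable ℝ Z) {c : ℝ}
    (hc : ∀ y, g y (Y y) (Z y) = c) (x : E) :
    g x (nab X Y x) (Z x) = -g x (Y x) (nab X Z x) := by
  have h := hLC.1 X Y Z hY hZ x
  rw [show (fun y => g y (Y y) (Z y)) = fun _ => c from funext hc, fderiv_fun_const,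
    Pi.zero_apply, zero_apply] at h
  linarith

theorem apply_nab_eq_zero_of_parallel (hLC : IsLeviCivita g nab) (X : E → E) {Y Z : E → E}
    (hY : Differentiable ℝ Y) (hZ : Differentiable ℝ Z) (hZpar : ∀ x, nab X Z x = 0)
    (hYZ : ∀ y, g y (Y y) (Z y) = 0) (x : E) :
    g x (nab X Y x) (Z x) = 0 := by
  rw [hLC.apply_nab_eq_neg_of_apply_const X hY hZ hYZ, hZpar, map_zero, neg_zero]

end IsLeviCivita

section UnitParallelPair

variable {E : Type*} [NormedAddCommGroup E] [NormedSpace ℝ E]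
  {g : E → E →L[ℝ] E →L[ℝ] ℝ} {nab : (E → E) → (E → E) → E → E} {V W : E → E} {b : E → ℝ}

theorem apply_nab_section_V_eq_zero (hLC : IsLeviCivita g nab) (hVdiff : Differentiable ℝ V)
    (hVpar : ∀ X : E → E, ∀ x : E, nab X V x = 0) (X : E → E) {Y : E → E}
    (hY : Differentiable ℝ Y) (hYV : ∀ y, g y (Y y) (V y) = 0) (x : E) :
    g x (nab X Y x) (V x) = 0 :=
  hLC.apply_nab_eq_zero_of_parallel X hY hVdiff (hVpar X) hYV x

theorem apply_nab_section_W (hLC : IsLeviCivita g nab) (hWdiff : Differentiable ℝ W)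
    (hW : ∀ X : E → E, Differentiable ℝ X → ∀ x : E,
      nab X W x = (b x / 2) • orthCompProj (g x) (V x) (W x) (X x))
    {X Y : E → E} (hX : Differentiable ℝ X) (hY : Differentiable ℝ Y)
    (hYD : IsSectionOfD g V W Y) (x : E) :
    g x (nab X Y x) (W x) = -(b x / 2) * g x (Y x) (X x) := by
  rw [hLC.apply_nab_eq_neg_of_apply_const X hY hWdiff (fun y => (hYD y).2), hW X hX x, map_smul,
    apply_orthCompProj_of_orthogonal _ (hYD x).1 (hYD x).2, smul_eq_mul, neg_mul]

theorem isSectionOfD_lieB (hLC : IsLeviCivita g nab) (hsymm : ∀ x u v, g x u v = g x v u)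
    (hVdiff : Differentiable ℝ V) (hVpar : ∀ X : E → E, ∀ x : E, nab X V x = 0)
    (hWdiff : Differentiable ℝ W)
    (hW : ∀ X : E → E, Differentiable ℝ X → ∀ x : E,
      nab X W x = (b x / 2) • orthCompProj (g x) (V x) (W x) (X x))
    {X Y : E → E} (hX : Differentiable ℝ X) (hY : Differentiable ℝ Y)
    (hXD : IsSectionOfD g V W X) (hYD : IsSectionOfD g V W Y) :
    IsSectionOfD g V W (lieB X Y) := by
  refine (hLC.isSectionOfD_lieB_iff hX hY).2 fun x => ⟨?_, ?_⟩
  · rw [apply_nab_section_V_eq_zero hLC hVdiff hVpar X hY (fun y => (hYD y).1),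
      apply_nab_section_V_eq_zero hLC hVdiff hVpar Y hX (fun y => (hXD y).1)]
  · rw [apply_nab_section_W hLC hWdiff hW hX hY hYD, apply_nab_section_W hLC hWdiff hW hY hX hXD,
      hsymm]

theorem lieB_V_W_eq_zero (hLC : IsLeviCivita g nab) (hVdiff : Differentiable ℝ V)
    (hVpar : ∀ X : E → E, ∀ x : E, nab X V x = 0) (hVunit : ∀ x, g x (V x) (V x) = 1)
    (hWdiff : Differentiable ℝ W) (hVW : ∀ x, g x (V x) (W x) = 0)
    (hW : ∀ X : E → E, Differentiable ℝ X → ∀ x : E,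
      nab X W x = (b x / 2) • orthCompProj (g x) (V x) (W x) (X x)) (x : E) :
    lieB V W x = 0 := by
  rw [← hLC.2 V W hVdiff hWdiff x, hW V hVdiff x, hVpar W x]
  simp [orthCompProj, hVunit x, hVW x]

theorem isSectionOfD_lieB_V_left (hLC : IsLeviCivita g nab)
    (hVdiff : Differentiable ℝ V) (hVpar : ∀ X : E → E, ∀ x : E, nab X V x = 0)
    (hWdiff : Differentiable ℝ W)
    (hW : ∀ X : E → E, Differentiable ℝ X → ∀ x : E,
      nab X W x = (b x / 2) • orthCompProj (g x) (V x) (W x) (X x))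
    {X : E → E} (hX : Differentiable ℝ X) (hXD : IsSectionOfD g V W X) :
    IsSectionOfD g V W (lieB V X) := by
  refine (hLC.isSectionOfD_lieB_iff hVdiff hX).2 fun x => ⟨?_, ?_⟩
  · rw [apply_nab_section_V_eq_zero hLC hVdiff hVpar V hX (fun y => (hXD y).1), hVpar X x,
      map_zero, zero_apply]
  · rw [apply_nab_section_W hLC hWdiff hW hVdiff hX hXD, hVpar X x, (hXD x).1, map_zero,
      zero_apply, mul_zero]

theorem isSectionOfD_lieB_W_left (hLC : IsLeviCivita g nab)
    (hsymm : ∀ x u v, g x u v = g x v u)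
    (hVdiff : Differentiable ℝ V) (hVpar : ∀ X : E → E, ∀ x : E, nab X V x = 0)
    (hVunit : ∀ x, g x (V x) (V x) = 1) (hWdiff : Differentiable ℝ W)
    (hWunit : ∀ x, g x (W x) (W x) = 1) (hVW : ∀ x, g x (V x) (W x) = 0)
    (hW : ∀ X : E → E, Differentiable ℝ X → ∀ x : E,
      nab X W x = (b x / 2) • orthCompProj (g x) (V x) (W x) (X x))
    {X : E → E} (hX : Differentiable ℝ X) (hXD : IsSectionOfD g V W X) :
    IsSectionOfD g V W (lieB W X) := by
  refine (hLC.isSectionOfD_lieB_iff hWdiff hX).2 fun x => ⟨?_, ?_⟩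
  · rw [apply_nab_section_V_eq_zero hLC hVdiff hVpar W hX (fun y => (hXD y).1), hW X hX x,
      map_smul, smul_apply,
      orthCompProj_apply_left _ (hVunit x) ((hsymm x _ _).trans (hVW x)), smul_zero]
  · rw [apply_nab_section_W hLC hWdiff hW hWdiff hX hXD, hW X hX x, (hXD x).2, map_smul,
      smul_apply, orthCompProj_apply_right _ (hVW x) (hWunit x), smul_zero, mul_zero]

end UnitParallelPair

theorem orthogonal_distribution_involutive_general
    {E : Type*} [NormedAddCommGroup E] [NormedSpace ℝ E]
    (g : E → E →L[ℝ] E →L[ℝ] ℝ)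
    (hsymm : ∀ x u v, g x u v = g x v u)
    (nab : (E → E) → (E → E) → E → E) (hLC : IsLeviCivita g nab)
    (V : E → E) (hVdiff : Differentiable ℝ V)
    (hVpar : ∀ X : E → E, ∀ x : E, nab X V x = 0)
    (hVunit : ∀ x, g x (V x) (V x) = 1)
    (W : E → E) (hWdiff : Differentiable ℝ W)
    (hWunit : ∀ x, g x (W x) (W x) = 1)
    (hVW : ∀ x, g x (V x) (W x) = 0)
    (b : E → ℝ)
    (hW : ∀ X : E → E, Differentiable ℝ X → ∀ x : E,
      nab X W x = (b x / 2) • (X x - g x (X x) (V x) • V x - g x (X x) (W x) • W x)) :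
    (∀ x : E, lieB V W x = 0) ∧
    (∀ X Y : E → E, Differentiable ℝ X → Differentiable ℝ Y →
      IsSectionOfD g V W X → IsSectionOfD g V W Y → IsSectionOfD g V W (lieB X Y)) ∧
    (∀ X : E → E, Differentiable ℝ X → IsSectionOfD g V W X →
      IsSectionOfD g V W (lieB V X)) ∧
    (∀ X : E → E, Differentiable ℝ X → IsSectionOfD g V W X →
      IsSectionOfD g V W (lieB W X)) :=
  ⟨lieB_V_W_eq_zero hLC hVdiff hVpar hVunit hWdiff hVW hW,
    fun _ _ hX hY => isSectionOfD_lieB hLC hsymm hVdiff hVpar hWdiff hW hX hY,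
    fun _ hX => isSectionOfD_lieB_V_left hLC hVdiff hVpar hWdiff hW hX,
    fun _ hX =>
      isSectionOfD_lieB_W_left hLC hsymm hVdiff hVpar hVunit hWdiff hWunit hVW hW hX⟩

/-- if `V` is a unit parallel field and `W` (`= JV`) is a unit field
orthogonal to `V` with `∇_X W = (b/2)(X − g(X,V)V − g(X,W)W)`, then the orthogonal
distribution `D = span{V,W}^⊥` is involutive, `[V,W] = 0`, and `[V,D] ⊆ D`,
`[W,D] ⊆ D`. -/
theorem orthogonal_distribution_involutive
    {E : Type*} [NormedAddCommGroup E] [NormedSpace ℝ E]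
    (g : E → E →L[ℝ] E →L[ℝ] ℝ) (hgdiff : Differentiable ℝ g)
    (hsymm : ∀ x u v, g x u v = g x v u)
    (hpos : ∀ x u, u ≠ 0 → 0 < g x u u)
    (nab : (E → E) → (E → E) → E → E) (hLC : IsLeviCivita g nab)
    (V : E → E) (hVdiff : Differentiable ℝ V)
    (hVpar : ∀ X : E → E, ∀ x : E, nab X V x = 0)
    (hVunit : ∀ x, g x (V x) (V x) = 1)
    (W : E → E) (hWdiff : Differentiable ℝ W)
    (hWunit : ∀ x, g x (W x) (W x) = 1)
    (hVW : ∀ x, g x (V x) (W x) = 0)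
    (b : E → ℝ)
    (hW : ∀ X : E → E, Differentiable ℝ X → ∀ x : E,
      nab X W x = (b x / 2) • (X x - g x (X x) (V x) • V x - g x (X x) (W x) • W x)) :
    (∀ x : E, lieB V W x = 0) ∧
    (∀ X Y : E → E, Differentiable ℝ X → Differentiable ℝ Y →
      IsSectionOfD g V W X → IsSectionOfD g V W Y → IsSectionOfD g V W (lieB X Y)) ∧
    (∀ X : E → E, Differentiable ℝ X → IsSectionOfD g V W X →
      IsSectionOfD g V W (lieB V X)) ∧
    (∀ X : E → E, Differentiable ℝ X → IsSectionOfD g V W X →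
      IsSectionOfD g V W (lieB W X)) :=
  orthogonal_distribution_involutive_general g hsymm nab hLC V hVdiff hVpar hVunit W hWdiff hWunit
    hVW b hW
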